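/- arXiv:2203.03116 — 2 statements merged into one kernel-verified Lean document; each statement's English description precedes it below -/
import Mathlib

section
/- Let m ≥ 1 and s ≥ 1 be integers, let c be a nonzero real number, and let b_1, …, b_{m+s} be distinct real numbers. If a vector (u_1, …, u_{m+s}) ∈ ℝ^{m+s} satisfies Σ_{j=1}^{m+s} b_j^l · exp(c·b_j) · u_j = 0 for every l ∈ {0, …, m−1} and Σ_{j=1}^{m+s} b_j^r · exp(−c·b_j) · u_j = 0 for every r ∈ {0, …, s−1}, then u_j = 0 for all j. Equivalently, the (m+s) × (m+s) matrix formed by these two blocks of rows is invertible. -/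
/-!
A vector `v` in the left kernel of the matrix gives, column by column,
`P(b_j) e^{c b_j} + Q(b_j) e^{-c b_j} = 0`, where `P` and `Q` are the polynomials whose
coefficients are the two blocks of `v`, so that `deg P < m` and `deg Q < s`. Multiplying by
`e^{c b_j}`, the function `P(x) e^{2cx} + Q(x)` has `m + s` distinct zeros, hence by Rolle
`(P' + 2cP)(x) e^{2cx} + Q'(x)` has `m + s - 1` of them. The operator `P ↦ P' + 2cP` keeps the
degree bound and is injective, while `Q ↦ Q'` lowers it, so induction on `s` reduces everything
to `Q = 0`, where `P` has more roots than its degree.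
-/

open Polynomial Real Finset Matrix

theorem exists_finset_hasDerivAt_eq_zero_card_le {f f' : ℝ → ℝ}
    (hf : ∀ x, HasDerivAt f (f' x) x) {S : Finset ℝ} (hS : ∀ x ∈ S, f x = 0) :
    ∃ T : Finset ℝ, #S ≤ #T + 1 ∧ ∀ z ∈ T, f' z = 0 := by
  classical
  have hcont : Continuous f := continuous_iff_continuousAt.2 fun x => (hf x).continuousAt
  have rolle : ∀ p ∈ (S ×ˢ S).filter (fun p => p.1 < p.2), ∃ z ∈ Set.Ioo p.1 p.2, f' z = 0 := by
    intro p hp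
    simp only [mem_filter, mem_product] at hp
    exact exists_hasDerivAt_eq_zero hp.2 hcont.continuousOn
      ((hS _ hp.1.1).trans (hS _ hp.1.2).symm) fun x _ => hf x
  choose! z hz hz' using rolle
  refine ⟨((S ×ˢ S).filter (fun p => p.1 < p.2)).image z, ?_, forall_mem_image.2 hz'⟩
  refine card_le_of_interleaved fun x hx y hy hxy _ => ?_
  have hxy' : (x, y) ∈ (S ×ˢ S).filter (fun p => p.1 < p.2) := by simp [hx, hy, hxy]
  exact ⟨z (x, y), mem_image_of_mem z hxy', hz _ hxy'⟩

namespace Polynomial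

theorem degree_derivative_lt_of_degree_lt_succ {R : Type*} [Semiring R] {p : R[X]} {n : ℕ}
    (h : p.degree < ↑(n + 1)) : (derivative p).degree < n := by
  rw [degree_lt_iff_coeff_zero] at h ⊢
  intro k hk
  rw [coeff_derivative, h (k + 1) (by omega), zero_mul]

theorem eq_zero_of_derivative_add_C_mul_eq_zero {R : Type*} [Ring R] [NoZeroDivisors R]
    {p : R[X]} {a : R} (ha : a ≠ 0) (h : derivative p + C a * p = 0) : p = 0 := by
  by_contra hp
  have hlt := degree_derivative_lt hp
  rw [eq_neg_of_add_eq_zero_left h, degree_neg, degree_C_mul ha] at hlt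
  exact lt_irrefl _ hlt

theorem hasDerivAt_eval_mul_exp_add_eval (P Q : ℝ[X]) (a x : ℝ) :
    HasDerivAt (fun x => P.eval x * exp (a * x) + Q.eval x)
      ((derivative P + C a * P).eval x * exp (a * x) + (derivative Q).eval x) x := by
  have hexp : HasDerivAt (fun x => exp (a * x)) (exp (a * x) * a) x := by
    simpa using ((hasDerivAt_id x).const_mul a).exp
  refine (((P.hasDerivAt x).mul hexp).add (Q.hasDerivAt x)).congr_deriv ?_
  simp only [eval_add, eval_mul, eval_C]
  ring

theorem eq_zero_of_eval_mul_exp_add_eval_eq_zero {a : ℝ} (ha : a ≠ 0) {m s : ℕ} {P Q : ℝ[X]}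
    (hP : P.degree < m) (hQ : Q.degree < s) {S : Finset ℝ} (hS : m + s ≤ #S)
    (hzero : ∀ x ∈ S, P.eval x * exp (a * x) + Q.eval x = 0) : P = 0 ∧ Q = 0 := by
  induction s generalizing P Q S with
  | zero =>
    obtain rfl : Q = 0 := degree_eq_bot.1 (Nat.WithBot.lt_zero_iff.1 (by exact_mod_cast hQ))
    refine ⟨eq_zero_of_degree_lt_of_eval_finset_eq_zero S (hP.trans_le (by exact_mod_cast hS))
      fun x hx => ?_, rfl⟩
    simpa [exp_ne_zero] using hzero x hx
  | succ s ih =>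
    obtain ⟨T, hST, hT⟩ := exists_finset_hasDerivAt_eq_zero_card_le
      (hasDerivAt_eval_mul_exp_add_eval P Q a) hzero
    have hP' : (derivative P + C a * P).degree < m :=
      (degree_add_le _ _).trans_lt (max_lt (degree_derivative_le.trans_lt hP)
        (by rw [← smul_eq_C_mul]; exact (degree_smul_le a P).trans_lt hP))
    obtain ⟨hP₁, hQ'⟩ := ih hP' (degree_derivative_lt_of_degree_lt_succ hQ) (by omega) hT
    obtain rfl := eq_zero_of_derivative_add_C_mul_eq_zero ha hP₁
    obtain ⟨x, hx⟩ : S.Nonempty := card_pos.1 (by omega)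
    rw [eq_C_of_derivative_eq_zero hQ'] at hzero ⊢
    simpa using hzero x hx

theorem eval_ofFn {R : Type*} [Semiring R] [DecidableEq R] {n : ℕ} (v : Fin n → R) (x : R) :
    (ofFn n v).eval x = ∑ i, v i * x ^ (i : ℕ) := by
  simp [ofFn_eq_sum_monomial, eval_finsetSum]

end Polynomial

noncomputable def expVandermonde (m s : ℕ) (c : ℝ) (b : Fin (m + s) → ℝ) :
    Matrix (Fin (m + s)) (Fin (m + s)) ℝ :=
  Matrix.of fun i j =>
    if (i : ℕ) < m then b j ^ (i : ℕ) * exp (c * b j)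
    else b j ^ ((i : ℕ) - m) * exp (-(c * b j))

theorem vecMul_expVandermonde_apply {m s : ℕ} (c : ℝ) (b : Fin (m + s) → ℝ)
    (v : Fin (m + s) → ℝ) (j : Fin (m + s)) :
    (v ᵥ* expVandermonde m s c b) j =
      (ofFn m (v ∘ Fin.castAdd s)).eval (b j) * exp (c * b j) +
        (ofFn s (v ∘ Fin.natAdd m)).eval (b j) * exp (-(c * b j)) := by
  simp [Matrix.vecMul, dotProduct, expVandermonde, Fin.sum_univ_add, eval_ofFn, sum_mul, mul_assoc]

theorem exp_mul_vecMul_expVandermonde_apply {m s : ℕ} (c : ℝ) (b : Fin (m + s) → ℝ)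
    (v : Fin (m + s) → ℝ) (j : Fin (m + s)) :
    exp (c * b j) * (v ᵥ* expVandermonde m s c b) j =
      (ofFn m (v ∘ Fin.castAdd s)).eval (b j) * exp (2 * c * b j) +
        (ofFn s (v ∘ Fin.natAdd m)).eval (b j) := by
  have hexp : exp (2 * c * b j) = exp (c * b j) * exp (c * b j) := by rw [← exp_add]; ring_nf
  have hexp' : exp (c * b j) * exp (-(c * b j)) = 1 := by rw [← exp_add]; simp
  rw [vecMul_expVandermonde_apply, hexp]
  linear_combination (ofFn s (v ∘ Fin.natAdd m)).eval (b j) * hexp'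

theorem isUnit_expVandermonde {m s : ℕ} {c : ℝ} (hc : c ≠ 0) {b : Fin (m + s) → ℝ}
    (hb : Function.Injective b) : IsUnit (expVandermonde m s c b) := by
  rw [Matrix.isUnit_iff_isUnit_det, isUnit_iff_ne_zero, Ne, ← Matrix.exists_vecMul_eq_zero_iff]
  rintro ⟨v, hv0, hv⟩
  have hzero : ∀ x ∈ univ.image b, (ofFn m (v ∘ Fin.castAdd s)).eval x * exp (2 * c * x) +
      (ofFn s (v ∘ Fin.natAdd m)).eval x = 0 := by
    refine forall_mem_image.2 fun j _ => ?_
    rw [← exp_mul_vecMul_expVandermonde_apply, hv, Pi.zero_apply, mul_zero]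
  obtain ⟨hP, hQ⟩ := eq_zero_of_eval_mul_exp_add_eval_eq_zero (mul_ne_zero two_ne_zero hc)
    (ofFn_degree_lt _) (ofFn_degree_lt _) (by rw [card_image_of_injective _ hb]; simp) hzero
  rw [map_eq_zero_iff _ (injective_ofFn m)] at hP
  rw [map_eq_zero_iff _ (injective_ofFn s)] at hQ
  refine hv0 (funext fun i => Fin.addCases (fun l => ?_) (fun r => ?_) i)
  exacts [congrFun hP l, congrFun hQ r]

theorem exp_vandermonde_two_block_system_trivial_solution_general
    (m s : ℕ) (c : ℝ) (hc : c ≠ 0)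
    (b : Fin (m + s) → ℝ) (hb : Function.Injective b)
    (u : Fin (m + s) → ℝ)
    (h1 : ∀ l < m, ∑ j, b j ^ l * Real.exp (c * b j) * u j = 0)
    (h2 : ∀ r < s, ∑ j, b j ^ r * Real.exp (-(c * b j)) * u j = 0) :
    (∀ j, u j = 0) ∧
    IsUnit (Matrix.of (fun i j : Fin (m + s) =>
      if h : (i : ℕ) < m then b j ^ (i : ℕ) * Real.exp (c * b j)
      else b j ^ ((i : ℕ) - m) * Real.exp (-(c * b j)))) := by
  have hM : IsUnit (expVandermonde m s c b) := isUnit_expVandermonde hc hb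
  have hMu : expVandermonde m s c b *ᵥ u = 0 := by
    funext i
    refine Fin.addCases (fun l => ?_) (fun r => ?_) i
    · simpa [expVandermonde, Matrix.mulVec, dotProduct, mul_comm, mul_left_comm] using h1 l l.2
    · simpa [expVandermonde, Matrix.mulVec, dotProduct, mul_comm, mul_left_comm] using h2 r r.2
  have hu : u = 0 := Matrix.mulVec_injective_iff_isUnit.2 hM (hMu.trans (Matrix.mulVec_zero _).symm)
  exact ⟨fun j => congrFun hu j, hM⟩

/-- For `m, s ≥ 1`, `c ≠ 0` and distinct reals `b_1, …, b_{m+s}`, the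
homogeneous `(m+s) × (m+s)` system consisting of the rows `∑_j b_j^l exp(c b_j) u_j = 0`
(`l = 0, …, m-1`) and `∑_j b_j^r exp(-c b_j) u_j = 0` (`r = 0, …, s-1`) has only the
trivial solution; equivalently, the corresponding block matrix is invertible. -/
theorem exp_vandermonde_two_block_system_trivial_solution
    (m s : ℕ) (hm : 1 ≤ m) (hs : 1 ≤ s) (c : ℝ) (hc : c ≠ 0)
    (b : Fin (m + s) → ℝ) (hb : Function.Injective b)
    (u : Fin (m + s) → ℝ)
    (h1 : ∀ l < m, ∑ j, b j ^ l * Real.exp (c * b j) * u j = 0)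
    (h2 : ∀ r < s, ∑ j, b j ^ r * Real.exp (-(c * b j)) * u j = 0) :
    (∀ j, u j = 0) ∧
    IsUnit (Matrix.of (fun i j : Fin (m + s) =>
      if h : (i : ℕ) < m then b j ^ (i : ℕ) * Real.exp (c * b j)
      else b j ^ ((i : ℕ) - m) * Real.exp (-(c * b j)))) :=
  exp_vandermonde_two_block_system_trivial_solution_general m s c hc b hb u h1 h2
end

section
/- Let k ≥ 3 be an odd integer, let c > 0, let s be an integer with (k+1)/2 ≤ s ≤ k−1, and let a_1 < ⋯ < a_s be distinct real numbers. Then every nonzero solution (A_1, …, A_s) ∈ ℝ^s of the right-sided kernel packet system on a_1, …, a_s satisfies A_1 ≠ 0. -/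
/-!
If `A_1 = 0`, the remaining coefficients solve a square homogeneous system whose rows are the
functions `x^l e^{-cx}` (`l < t := (k-1)/2`) and `x^l e^{cx}` (`l < s-1-t`) evaluated at
`a_2 < ⋯ < a_s`. A nonzero kernel vector of this matrix gives a nonzero kernel vector of its
transpose, i.e. an exponential polynomial `P(x) + Q(x) e^{2cx}` with `deg P < t` and
`deg Q < s-1-t`, not identically zero, vanishing at the `s-1` points. Rolle's theorem rules this
out: differentiation lowers `deg P` by one, keeps `deg Q` (since `(Q e^{dx})' = (Q' + dQ) e^{dx}`)
and loses at most one zero, so by induction on `deg P` such a function has fewer than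
`deg P + deg Q + 2` zeros.
-/

/-- The right-sided kernel packet system on points `a_1 < ⋯ < a_s`, with parameters
`k` (odd, `≥ 3`) and `c > 0`: the `(k-1)/2` equations
`∑_j A_j a_j^l exp(-c a_j) = 0` for `l = 0, …, (k-3)/2`, together with (only when
`s ≥ (k+3)/2`) the auxiliary equations `∑_j A_j a_j^r exp(c a_j) = 0` for
`r = 0, …, s - (k+3)/2`; in total `s - 1` equations. -/
def RightSidedKPSystem (k : ℕ) (c : ℝ) {s : ℕ} (a : Fin s → ℝ) (A : Fin s → ℝ) : Prop :=
  (∀ l ≤ (k - 3) / 2, ∑ j, A j * a j ^ l * Real.exp (-(c * a j)) = 0) ∧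
  (∀ r : ℕ, r + (k + 3) / 2 ≤ s → ∑ j, A j * a j ^ r * Real.exp (c * a j) = 0)

open Matrix Polynomial Real

theorem Matrix.mulVec_injective_of_vecMul_injective {m n K : Type*} [Fintype m] [Fintype n]
    [DecidableEq m] [Field K] (e : n ≃ m) {M : Matrix m n K}
    (h : Function.Injective M.vecMul) : Function.Injective M.mulVec := by
  set M' := M.submatrix (Equiv.refl m) e.symm
  have hvecMul (v : m → K) : v ᵥ* M' = (v ᵥ* M) ∘ e.symm := M.submatrix_vecMul_equiv v _ _
  have hmulVec (u : n → K) : M' *ᵥ (u ∘ e.symm) = M *ᵥ u := by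
    simp [M', Matrix.submatrix_mulVec_equiv, Function.comp_assoc]
  have hM' : IsUnit M' := by
    rw [← Matrix.vecMul_injective_iff_isUnit]
    intro v w hvw
    simp only [hvecMul] at hvw
    exact h (e.symm.surjective.injective_comp_right hvw)
  intro u v huv
  rw [← hmulVec, ← hmulVec] at huv
  exact e.symm.surjective.injective_comp_right (Matrix.mulVec_injective_of_isUnit hM' huv)

theorem StrictMono.exists_strictMono_hasDerivAt_eq_zero {N : ℕ} {f f' : ℝ → ℝ}
    (hf : ∀ x, HasDerivAt f (f' x) x) {x : Fin (N + 1) → ℝ} (hx : StrictMono x)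
    (hzero : ∀ i, f (x i) = 0) : ∃ y : Fin N → ℝ, StrictMono y ∧ ∀ i, f' (y i) = 0 := by
  have hrolle (i : Fin N) : ∃ y ∈ Set.Ioo (x i.castSucc) (x i.succ), f' y = 0 :=
    exists_hasDerivAt_eq_zero (hx Fin.castSucc_lt_succ)
      (continuous_iff_continuousAt.2 fun y => (hf y).continuousAt).continuousOn
      ((hzero _).trans (hzero _).symm) fun y _ => hf y
  choose y hy hy' using hrolle
  refine ⟨y, fun i j hij => ?_, hy'⟩
  calc y i < x i.succ := (hy i).2
    _ ≤ x j.castSucc := hx.monotone (Fin.succ_le_castSucc_iff.mpr hij)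
    _ < y j := (hy j).1

namespace Polynomial

theorem degree_derivative_add_C_mul {R : Type*} [CommSemiring R] [NoZeroDivisors R] (Q : R[X])
    {d : R} (hd : d ≠ 0) : (derivative Q + C d * Q).degree = Q.degree := by
  rcases eq_or_ne Q 0 with rfl | hQ
  · simp
  · rw [degree_add_eq_right_of_degree_lt] <;> rw [degree_C_mul hd]
    exact degree_derivative_lt hQ

theorem degree_derivative_lt_of_degree_lt_succ_s13 {R : Type*} [Semiring R] {P : R[X]} {m : ℕ}
    (hP : P.degree < ↑(m + 1)) : (derivative P).degree < m := by
  rw [degree_lt_iff_coeff_zero] at hP ⊢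
  intro j hj
  rw [coeff_derivative, hP (j + 1) (by omega), zero_mul]

theorem hasDerivAt_eval_add_eval_mul_exp (P Q : ℝ[X]) (d x : ℝ) :
    HasDerivAt (fun y => P.eval y + Q.eval y * exp (d * y))
      ((derivative P).eval x + (derivative Q + C d * Q).eval x * exp (d * x)) x := by
  have hexp : HasDerivAt (fun y => exp (d * y)) (exp (d * x) * d) x :=
    ((hasDerivAt_id x).const_mul d).exp.congr_deriv (by simp)
  refine ((P.hasDerivAt x).add ((Q.hasDerivAt x).mul hexp)).congr_deriv ?_
  simp only [eval_add, eval_mul, eval_C]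
  ring

theorem eq_zero_and_eq_zero_of_eval_add_eval_mul_exp_eq_zero {d : ℝ} (hd : d ≠ 0) {m n N : ℕ}
    {P Q : ℝ[X]} (hP : P.degree < m) (hQ : Q.degree < n) (hN : m + n ≤ N) {x : Fin N → ℝ}
    (hx : StrictMono x) (hzero : ∀ i, P.eval (x i) + Q.eval (x i) * exp (d * x i) = 0) :
    P = 0 ∧ Q = 0 := by
  induction m generalizing N P Q with
  | zero =>
    obtain rfl : P = 0 := by simpa using hP
    refine ⟨rfl, eq_zero_of_degree_lt_of_eval_index_eq_zero Finset.univ hx.injective.injOn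
      (hQ.trans_le (by simpa using hN)) fun i _ => ?_⟩
    simpa [exp_ne_zero] using hzero i
  | succ m ih =>
    obtain ⟨N, rfl⟩ : ∃ N', N = N' + 1 := ⟨N - 1, by omega⟩
    obtain ⟨y, hy, hy'⟩ := hx.exists_strictMono_hasDerivAt_eq_zero
      (hasDerivAt_eval_add_eval_mul_exp P Q d) hzero
    obtain ⟨hP', hQ'⟩ := ih (degree_derivative_lt_of_degree_lt_succ_s13 hP)
      ((degree_derivative_add_C_mul Q hd).trans_lt hQ) (by omega) hy hy'
    obtain rfl : Q = 0 := by
      simpa [degree_derivative_add_C_mul Q hd] using congrArg degree hQ'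
    rw [eq_C_of_derivative_eq_zero hP'] at hzero ⊢
    simpa using hzero 0

end Polynomial

noncomputable def kpBasis (c : ℝ) {t n : ℕ} : Fin t ⊕ Fin n → ℝ → ℝ :=
  Sum.elim (fun l x => x ^ (l : ℕ) * exp (-(c * x))) (fun l x => x ^ (l : ℕ) * exp (c * x))

noncomputable def kpMatrix (c : ℝ) (t n : ℕ) {N : ℕ} (x : Fin N → ℝ) :
    Matrix (Fin t ⊕ Fin n) (Fin N) ℝ :=
  Matrix.of fun i j => kpBasis c i (x j)

section KernelPacket

variable {c : ℝ} {t n : ℕ}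

theorem sum_mul_kpBasis (w : Fin t ⊕ Fin n → ℝ) (x : ℝ) :
    ∑ i, w i * kpBasis c i x =
      (((degreeLTEquiv ℝ t).symm (w ∘ Sum.inl) : ℝ[X]).eval x +
        ((degreeLTEquiv ℝ n).symm (w ∘ Sum.inr) : ℝ[X]).eval x * exp (2 * c * x)) *
        exp (-(c * x)) := by
  have h2c : exp (2 * c * x) * exp (-(c * x)) = exp (c * x) := by
    rw [← exp_add]; ring_nf
  rw [eval_eq_sum_degreeLTEquiv (Submodule.coe_mem _),
    eval_eq_sum_degreeLTEquiv (Submodule.coe_mem _)]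
  simp only [Subtype.coe_eta, LinearEquiv.apply_symm_apply, Fintype.sum_sum_type, kpBasis,
    Sum.elim_inl, Sum.elim_inr, Function.comp_apply, add_mul, Finset.sum_mul]
  congr 1 <;> refine Finset.sum_congr rfl fun l _ => ?_
  · ring
  · linear_combination -(w (Sum.inr l) * x ^ (l : ℕ)) * h2c

theorem eq_zero_of_forall_sum_mul_kpBasis_eq_zero (hc : c ≠ 0) {N : ℕ} {x : Fin N → ℝ}
    (hx : StrictMono x) (hN : t + n ≤ N) {w : Fin t ⊕ Fin n → ℝ}
    (hw : ∀ j, ∑ i, w i * kpBasis c i (x j) = 0) : w = 0 := by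
  set P : ℝ[X] := ↑((degreeLTEquiv ℝ t).symm (w ∘ Sum.inl))
  set Q : ℝ[X] := ↑((degreeLTEquiv ℝ n).symm (w ∘ Sum.inr))
  have hzero (j : Fin N) : P.eval (x j) + Q.eval (x j) * exp (2 * c * x j) = 0 := by
    have hwj := hw j
    rw [sum_mul_kpBasis, mul_eq_zero] at hwj
    exact hwj.resolve_right (exp_ne_zero _)
  obtain ⟨hP, hQ⟩ := eq_zero_and_eq_zero_of_eval_add_eval_mul_exp_eq_zero
    (mul_ne_zero two_ne_zero hc) (mem_degreeLT.1 (Submodule.coe_mem _))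
    (mem_degreeLT.1 (Submodule.coe_mem _)) hN hx hzero
  simp only [Submodule.coe_eq_zero, LinearEquiv.map_eq_zero_iff] at hP hQ
  rw [← Sum.elim_comp_inl_inr w, hP, hQ]
  exact Sum.elim_zero_zero

theorem kpMatrix_mulVec_injective (hc : c ≠ 0) {N : ℕ} {x : Fin N → ℝ} (hx : StrictMono x)
    (hN : t + n = N) : Function.Injective (kpMatrix c t n x).mulVec := by
  refine mulVec_injective_of_vecMul_injective (finSumFinEquiv.trans (finCongr hN)).symm ?_
  refine (injective_iff_map_eq_zero (vecMulLinear (kpMatrix c t n x))).2 fun w hw =>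
    eq_zero_of_forall_sum_mul_kpBasis_eq_zero hc hx hN.le fun j => ?_
  simpa [vecMul, dotProduct, kpMatrix] using congrFun hw j

end KernelPacket

/-- For odd `k ≥ 3`, `c > 0`, `(k+1)/2 ≤ s ≤ k-1`, and points
`a_1 < ⋯ < a_s`, every nonzero solution `A` of the right-sided kernel packet system
satisfies `A_1 ≠ 0`. -/
theorem right_sided_kp_first_coefficient_ne_zero
    (k : ℕ) (hk3 : 3 ≤ k) (c : ℝ) (hc : 0 < c)
    (s : ℕ) (hs1 : (k + 1) / 2 ≤ s)
    (a : Fin s → ℝ) (ha : StrictMono a)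
    (A : Fin s → ℝ) (hA0 : A ≠ 0) (hA : RightSidedKPSystem k c a A) :
    A ⟨0, by omega⟩ ≠ 0 := by
  obtain ⟨N, rfl⟩ : ∃ N, s = N + 1 := ⟨s - 1, by omega⟩
  set t := (k - 1) / 2
  intro (hA₀ : A 0 = 0)
  have hsystem : kpMatrix c t (N - t) (a ∘ Fin.succ) *ᵥ (A ∘ Fin.succ) = 0 := by
    ext (l | l)
    · simpa [Fin.sum_univ_succ, hA₀, kpMatrix, kpBasis, mulVec, dotProduct, mul_comm, mul_assoc]
        using hA.1 l (by omega)
    · simpa [Fin.sum_univ_succ, hA₀, kpMatrix, kpBasis, mulVec, dotProduct, mul_comm, mul_assoc]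
        using hA.2 l (by omega)
  have hA' : A ∘ Fin.succ = 0 :=
    kpMatrix_mulVec_injective hc.ne' (ha.comp Fin.strictMono_succ) (by omega)
      (hsystem.trans (mulVec_zero _).symm)
  exact hA0 (funext (Fin.cases hA₀ (congrFun hA')))
end
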